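/- arXiv:2509.20351 — 3 statements merged into one kernel-verified Lean document; each statement's English description precedes it below -/
import Mathlib

section
/- For any finite simple graph G with m edges, the sum over all edges e = {u,v} of min{deg(u), deg(v)} is at most 2m · α(G), where α(G) is the arboricity of G. -/
open SimpleGraph Finset
open scoped Classical

/-- The arboricity of a graph: the minimum number of forests needed to cover its edge set. -/
noncomputable def arboricity {V : Type*} (G : SimpleGraph V) : ℕ :=
  sInf {k | ∃ F : Fin k → SimpleGraph V, (∀ i, (F i).IsAcyclic) ∧
    ∀ ⦃a b : V⦄, G.Adj a b → ∃ i, (F i).Adj a b}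

/-- `minDeg G e` is the minimum of the degrees of the endpoints of `e`. -/
def minDeg {V : Type*} [Fintype V] (G : SimpleGraph V) [DecidableRel G.Adj] (e : Sym2 V) : ℕ :=
  Sym2.lift ⟨fun u v => min (G.degree u) (G.degree v), fun u v => min_comm _ _⟩ e

lemma forest_inj {V : Type*} (F : SimpleGraph V) (hF : F.IsAcyclic) :
    ∃ f : F.edgeSet → V, (∀ e : F.edgeSet, (f e : V) ∈ (e : Sym2 V)) ∧ Function.Injective f := by
  classical
  set root : V → V := fun v => ((F.connectedComponentMk v).out) with hroot
  have reach : ∀ v : V, F.Reachable (root v) v := by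
    intro v
    have h2 : F.connectedComponentMk ((F.connectedComponentMk v).out) = F.connectedComponentMk v :=
      @Quot.out_eq _ _ (F.connectedComponentMk v)
    exact SimpleGraph.ConnectedComponent.eq.mp h2
  set P : ∀ v : V, F.Walk (root v) v := fun v => (reach v).some.toPath with hP
  have hPpath : ∀ v, (P v).IsPath := fun v => ((reach v).some.toPath).2
  have hrootadj : ∀ {u v : V}, F.Adj u v → root u = root v := by
    intro u v h
    have : F.connectedComponentMk u = F.connectedComponentMk v :=
      SimpleGraph.ConnectedComponent.eq.mpr h.reachable
    simp only [hroot, this]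
  -- uniqueness of paths from root v to v
  have uniq : ∀ {v : V} (q : F.Walk (root v) v), q.IsPath → q = P v := by
    intro v q hq
    have := hF.path_unique ⟨q, hq⟩ ⟨P v, hPpath v⟩
    exact congrArg Subtype.val this
  -- the "child" claim
  have claim : ∀ {u v : V}, F.Adj u v → v ∈ (P u).support ∨ u ∈ (P v).support := by
    intro u v h
    by_contra hc
    push_neg at hc
    obtain ⟨h1, h2⟩ := hc
    have heq : root u = root v := hrootadj h
    set Q : F.Walk (root v) v := ((P u).concat h).copy heq rfl with hQ
    have hQp : Q.IsPath := by
      apply Walk.IsPath.mk'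
      rw [hQ, Walk.support_copy, Walk.support_concat]
      refine List.Nodup.append (hPpath u).support_nodup (List.nodup_singleton v) ?_
      intro a ha hb
      rw [List.mem_singleton] at hb
      subst hb
      exact h1 ha
    have := uniq Q hQp
    apply h2
    rw [← this, hQ, Walk.support_copy, Walk.support_concat]
    exact List.mem_append_left _ (Walk.end_mem_support _)
  -- penultimate uniqueness
  have pen : ∀ {v u : V}, F.Adj u v → (hu : u ∈ (P v).support) →
      (P v).support = ((P v).takeUntil u hu).support ++ [v] := by
    intro v u h hu
    have hD : ((P v).dropUntil u hu).IsPath := (hPpath v).dropUntil hu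
    have hE : (Walk.cons h (Walk.nil : F.Walk v v)).IsPath := by
      simp [Walk.isPath_iff_eq_nil, h.ne]
    have hDE : (P v).dropUntil u hu = Walk.cons h Walk.nil := by
      have := hF.path_unique ⟨_, hD⟩ ⟨_, hE⟩
      exact congrArg Subtype.val this
    conv_lhs => rw [← Walk.take_spec (P v) hu]
    rw [Walk.support_append, hDE]
    simp
  have pen_uniq : ∀ {v u1 u2 : V}, F.Adj u1 v → F.Adj u2 v →
      (hu1 : u1 ∈ (P v).support) → (hu2 : u2 ∈ (P v).support) → u1 = u2 := by
    intro v u1 u2 h1 h2 hu1 hu2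
    have e1 := pen h1 hu1
    have e2 := pen h2 hu2
    -- last element of takeUntil support is u1 resp u2; compare reverses
    have r1 : (P v).support.reverse = v :: ((P v).takeUntil u1 hu1).support.reverse := by
      rw [e1]; simp
    have r2 : (P v).support.reverse = v :: ((P v).takeUntil u2 hu2).support.reverse := by
      rw [e2]; simp
    have t1 : ((P v).takeUntil u1 hu1).support.reverse =
        u1 :: ((P v).takeUntil u1 hu1).reverse.support.tail := by
      rw [← Walk.support_reverse]
      exact Walk.support_eq_cons _
    have t2 : ((P v).takeUntil u2 hu2).support.reverse =
        u2 :: ((P v).takeUntil u2 hu2).reverse.support.tail := by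
      rw [← Walk.support_reverse]
      exact Walk.support_eq_cons _
    have : v :: u1 :: ((P v).takeUntil u1 hu1).reverse.support.tail
        = v :: u2 :: ((P v).takeUntil u2 hu2).reverse.support.tail := by
      rw [← t1, ← t2, ← r1, ← r2]
    exact (List.cons.injEq _ _ _ _).mp ((List.cons.injEq _ _ _ _).mp this).2 |>.1
  -- existence of child representation for each edge
  have key : ∀ e ∈ F.edgeSet, ∃ x y : V, e = s(x, y) ∧ F.Adj y x ∧ y ∈ (P x).support := by
    intro e he
    induction e with
    | _ u v =>
      have h : F.Adj u v := he
      rcases claim h with hc | hc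
      · exact ⟨u, v, rfl, h.symm, hc⟩
      · exact ⟨v, u, Sym2.eq_swap, h, hc⟩
  refine ⟨fun e => (key e.1 e.2).choose, ?_, ?_⟩
  · intro e
    obtain ⟨y, hxy, _, _⟩ := (key e.1 e.2).choose_spec
    rw [hxy]  -- need (e:Sym2 V) membership
    exact Sym2.mem_mk_left _ _
  · intro e1 e2 hf
    obtain ⟨y1, hxy1, hadj1, hm1⟩ := (key e1.1 e1.2).choose_spec
    obtain ⟨y2, hxy2, hadj2, hm2⟩ := (key e2.1 e2.2).choose_spec
    set x1 := (key e1.1 e1.2).choose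
    set x2 := (key e2.1 e2.2).choose
    have hx : x1 = x2 := hf
    rw [← hx] at hadj2 hm2 hxy2
    have hy : y1 = y2 := pen_uniq hadj1 hadj2 hm1 hm2
    apply Subtype.ext
    rw [hxy1, hxy2, hy]


lemma single_edge_acyclic {V : Type*} (e : Sym2 V) :
    (SimpleGraph.fromEdgeSet {e}).IsAcyclic := by
  intro v c hc
  cases c with
  | nil => simp at hc
  | cons h p =>
    cases p with
    | nil => exact h.ne rfl
    | cons h2 q =>
      have hnd := hc.edges_nodup
      simp only [Walk.edges_cons, List.nodup_cons, List.mem_cons] at hnd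
      apply hnd.1
      left
      have e1 := ((SimpleGraph.fromEdgeSet_adj _).mp h).1
      have e2 := ((SimpleGraph.fromEdgeSet_adj _).mp h2).1
      rw [e1, e2]

lemma minDeg_le {V : Type*} [Fintype V] (G : SimpleGraph V) [DecidableRel G.Adj]
    (e : Sym2 V) (x : V) (hx : x ∈ e) : minDeg G e ≤ G.degree x := by
  induction e with
  | _ u v =>
    rcases Sym2.mem_iff.mp hx with rfl | rfl
    · exact min_le_left _ _
    · exact min_le_right _ _


/-- `Σ_{e∈E} min{deg u, deg v} ≤ 2m·α(G)`. -/
theorem stmt_2 {V : Type*} [Fintype V] [DecidableEq V] (G : SimpleGraph V)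
    [DecidableRel G.Adj] :
    ∑ e ∈ G.edgeFinset, minDeg G e ≤ 2 * G.edgeFinset.card * arboricity G := by
  classical
  -- the defining set of arboricity is nonempty
  have hne : {k | ∃ F : Fin k → SimpleGraph V, (∀ i, (F i).IsAcyclic) ∧
      ∀ ⦃a b : V⦄, G.Adj a b → ∃ i, (F i).Adj a b}.Nonempty := by
    refine ⟨G.edgeFinset.card,
      fun i => SimpleGraph.fromEdgeSet {(G.edgeFinset.equivFin.symm i : Sym2 V)},
      fun i => single_edge_acyclic _, ?_⟩
    intro a b hab
    have he : s(a, b) ∈ G.edgeFinset := by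
      rw [SimpleGraph.mem_edgeFinset]; exact hab
    refine ⟨G.edgeFinset.equivFin ⟨s(a, b), he⟩, ?_⟩
    simp only [Equiv.symm_apply_apply]
    exact (SimpleGraph.fromEdgeSet_adj _).mpr ⟨rfl, hab.ne⟩
  have hmem := Nat.sInf_mem hne
  obtain ⟨F, hFa, hFc⟩ := hmem
  set k := arboricity G with hk
  choose f hf hinj using fun i => forest_inj (F i) (hFa i)
  have fcast : ∀ i j (hij : i = j) (x : ↑(F j).edgeSet),
      f j x = f i ⟨(x : Sym2 V), by rw [hij]; exact x.2⟩ := by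
    rintro i j rfl x; rfl
  -- each G-edge lies in some forest
  have cov : ∀ e : {x // x ∈ G.edgeFinset}, ∃ i, (e : Sym2 V) ∈ (F i).edgeSet := by
    rintro ⟨e, he⟩
    rw [SimpleGraph.mem_edgeFinset] at he
    induction e with
    | _ a b =>
      obtain ⟨i, hi⟩ := hFc he
      exact ⟨i, hi⟩
  choose I hI using cov
  set g : {x // x ∈ G.edgeFinset} → V := fun e => f (I e) ⟨e.1, hI e⟩ with hg
  have hgmem : ∀ e : {x // x ∈ G.edgeFinset}, g e ∈ (e : Sym2 V) := fun e => hf _ _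
  -- step 1
  have step1 : ∑ e ∈ G.edgeFinset, minDeg G e ≤ ∑ e ∈ G.edgeFinset.attach, G.degree (g e) := by
    rw [← Finset.sum_attach G.edgeFinset (minDeg G)]
    exact Finset.sum_le_sum fun e _ => minDeg_le G e.1 (g e) (hgmem e)
  -- fibers of g have size at most k
  have fiber : ∀ v : V, (G.edgeFinset.attach.filter fun e => g e = v).card ≤ k := by
    intro v
    have : (G.edgeFinset.attach.filter fun e => g e = v).card ≤ (Finset.univ : Finset (Fin k)).card := by
      apply Finset.card_le_card_of_injOn (fun e => I e) (fun e _ => Finset.mem_univ _)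
      intro e1 he1 e2 he2 hI12
      simp only [Finset.mem_coe, Finset.mem_filter] at he1 he2
      have h1 : g e1 = v := he1.2
      have h2 : g e2 = v := he2.2
      have hIeq : I e1 = I e2 := hI12
      have heq2 : f (I e1) ⟨e1.1, hI e1⟩ = f (I e1) ⟨(e2 : Sym2 V), by rw [hIeq]; exact hI e2⟩ := by
        rw [← fcast (I e1) (I e2) hIeq ⟨e2.1, hI e2⟩]
        exact h1.trans h2.symm
      have := hinj (I e1) heq2
      exact Subtype.ext (Subtype.mk_eq_mk.mp this)
    simpa using this
  -- step 2: fiberwise counting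
  have step2 : ∑ e ∈ G.edgeFinset.attach, G.degree (g e)
      ≤ k * (2 * G.edgeFinset.card) := by
    have hsplit : ∑ e ∈ G.edgeFinset.attach, G.degree (g e)
        = ∑ v ∈ Finset.univ, ∑ e ∈ G.edgeFinset.attach.filter (fun e => g e = v), G.degree (g e) :=
      (Finset.sum_fiberwise_of_maps_to (fun e _ => Finset.mem_univ (g e)) _).symm
    rw [hsplit]
    have hbound : ∀ v ∈ (Finset.univ : Finset V),
        ∑ e ∈ G.edgeFinset.attach.filter (fun e => g e = v), G.degree (g e) ≤ k * G.degree v := by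
      intro v _
      have : ∑ e ∈ G.edgeFinset.attach.filter (fun e => g e = v), G.degree (g e)
          = ∑ e ∈ G.edgeFinset.attach.filter (fun e => g e = v), G.degree v := by
        apply Finset.sum_congr rfl
        intro e he
        rw [(Finset.mem_filter.mp he).2]
      rw [this, Finset.sum_const, smul_eq_mul]
      exact Nat.mul_le_mul_right _ (fiber v)
    calc ∑ v ∈ Finset.univ, ∑ e ∈ G.edgeFinset.attach.filter (fun e => g e = v), G.degree (g e)
        ≤ ∑ v ∈ Finset.univ, k * G.degree v := Finset.sum_le_sum hbound
      _ = k * ∑ v, G.degree v := by rw [Finset.mul_sum]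
      _ = k * (2 * G.edgeFinset.card) := by rw [SimpleGraph.sum_degrees_eq_twice_card_edges]
  calc ∑ e ∈ G.edgeFinset, minDeg G e ≤ k * (2 * G.edgeFinset.card) := step1.trans step2
    _ = 2 * G.edgeFinset.card * arboricity G := by rw [hk]; ring
end

section
/- Any finite simple graph with m edges contains at most 2·m^{3/2} triangles. -/
open SimpleGraph Finset
open scoped Classical

/-- The number of triangles through a vertex `v` is at most `d(v) choose 2`. -/
lemma triangles_through_vertex_le {V : Type*} [Fintype V] [DecidableEq V] (G : SimpleGraph V)
    [DecidableRel G.Adj] (v : V) :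
    ((G.cliqueFinset 3).filter (fun t => v ∈ t)).card ≤ (G.degree v).choose 2 := by
  rw [← G.card_neighborFinset_eq_degree v, ← Finset.card_powersetCard]
  apply Finset.card_le_card_of_injOn (fun t => t.erase v)
  · intro t ht
    simp only [Finset.mem_coe, Finset.mem_filter, mem_cliqueFinset_iff] at ht
    obtain ⟨⟨hc, h3⟩, hv⟩ := ht
    simp only [Finset.mem_coe, Finset.mem_powersetCard]
    constructor
    · intro w hw
      rw [Finset.mem_erase] at hw
      exact (mem_neighborFinset G v w).2 (hc hv hw.2 (Ne.symm hw.1))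
    · rw [Finset.card_erase_of_mem hv, h3]
  · intro t1 h1 t2 h2 he
    simp only [Finset.mem_coe, Finset.mem_filter] at h1 h2
    rw [← Finset.insert_erase h1.2, ← Finset.insert_erase h2.2]
    exact congrArg (insert v) he

/-- a graph with `m` edges has at most `2·m^{3/2}` triangles. -/
theorem stmt_4 {V : Type*} [Fintype V] [DecidableEq V] (G : SimpleGraph V)
    [DecidableRel G.Adj] :
    ((G.cliqueFinset 3).card : ℝ) ≤ 2 * (G.edgeFinset.card : ℝ) ^ ((3 : ℝ) / 2) := by
  classical
  by_cases h0 : G.edgeFinset.card = 0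
  · have hbot : G = ⊥ := edgeFinset_eq_empty.1 (Finset.card_eq_zero.1 h0)
    have hfree : G.CliqueFree 3 := by
      intro s hs
      rw [hbot] at hs
      have := (isNClique_bot_iff.1 hs).1
      omega
    rw [cliqueFinset_eq_empty_iff.2 hfree, h0]
    norm_num [Real.zero_rpow]
  · have hm1 : 1 ≤ G.edgeFinset.card := Nat.one_le_iff_ne_zero.2 h0
    set m := G.edgeFinset.card with hm
    set M : ℝ := (m : ℝ) with hMdef
    have hM1 : (1 : ℝ) ≤ M := by rw [hMdef]; exact_mod_cast hm1
    set s : ℝ := Real.sqrt (2 * M) with hsdef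
    have hs0 : 0 ≤ s := Real.sqrt_nonneg _
    have hs2 : s ^ 2 = 2 * M := Real.sq_sqrt (by linarith)
    have hspos : 0 < s := Real.sqrt_pos.2 (by linarith)
    set r : ℝ := Real.sqrt M with hrdef
    have hr0 : 0 ≤ r := Real.sqrt_nonneg _
    have hr2 : r ^ 2 = M := Real.sq_sqrt (by linarith)
    have hMr : M ^ ((3 : ℝ) / 2) = r ^ 3 := by
      rw [show ((3 : ℝ) / 2) = (1 / 2) * 3 by ring, Real.rpow_mul (by linarith),
        hrdef, Real.sqrt_eq_rpow, show ((3 : ℝ)) = ((3 : ℕ) : ℝ) by norm_num, Real.rpow_natCast]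
    have hsr : s = Real.sqrt 2 * r := by
      rw [hsdef, hrdef, Real.sqrt_mul (by norm_num)]
    have hdeg : (∑ v, (G.degree v : ℝ)) = 2 * M := by
      rw [← Nat.cast_sum, G.sum_degrees_eq_twice_card_edges, hMdef, ← hm]
      push_cast
      ring
    clear_value r
    clear hrdef
    clear_value s
    clear hsdef
    clear_value M
    clear hMdef hm h0 hm1
    -- heavy and light vertices
    set H : Finset V := Finset.univ.filter (fun v => s ≤ (G.degree v : ℝ)) with hHdef
    set L : Finset V := Finset.univ.filter (fun v => (G.degree v : ℝ) < s) with hLdef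
    have hHcard : (H.card : ℝ) ≤ s := by
      have h1 : (H.card : ℝ) * s ≤ ∑ v ∈ H, (G.degree v : ℝ) := by
        calc (H.card : ℝ) * s = ∑ _v ∈ H, s := by rw [Finset.sum_const, nsmul_eq_mul]
          _ ≤ ∑ v ∈ H, (G.degree v : ℝ) := Finset.sum_le_sum fun v hv => by
              simpa [hHdef] using (Finset.mem_filter.1 hv).2
      have h2 : ∑ v ∈ H, (G.degree v : ℝ) ≤ ∑ v, (G.degree v : ℝ) := by
        apply Finset.sum_le_sum_of_subset_of_nonneg (Finset.subset_univ H)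
        intro v _ _; positivity
      have h3 : (H.card : ℝ) * s ≤ s * s := by
        rw [← sq]
        calc (H.card : ℝ) * s ≤ ∑ v, (G.degree v : ℝ) := le_trans h1 h2
          _ = 2 * M := hdeg
          _ = s ^ 2 := hs2.symm
      exact le_of_mul_le_mul_right (by linarith) hspos
    -- cover of the triangles
    have hcover : G.cliqueFinset 3 ⊆
        (H.powersetCard 3) ∪ L.biUnion (fun v => (G.cliqueFinset 3).filter (fun t => v ∈ t)) := by
      intro t ht
      by_cases hsub : t ⊆ H
      · apply Finset.mem_union_left
        rw [Finset.mem_powersetCard]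
        exact ⟨hsub, (mem_cliqueFinset_iff.1 ht).2⟩
      · apply Finset.mem_union_right
        obtain ⟨v, hvt, hvH⟩ := Finset.not_subset.1 hsub
        rw [Finset.mem_biUnion]
        refine ⟨v, ?_, Finset.mem_filter.2 ⟨ht, hvt⟩⟩
        rw [hLdef, Finset.mem_filter]
        refine ⟨Finset.mem_univ v, ?_⟩
        by_contra hcon
        exact hvH (by rw [hHdef, Finset.mem_filter]; exact ⟨Finset.mem_univ v, by linarith⟩)
    -- counting
    have hcount : (G.cliqueFinset 3).card ≤
        H.card.choose 3 + ∑ v ∈ L, (G.degree v).choose 2 := by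
      calc (G.cliqueFinset 3).card
          ≤ ((H.powersetCard 3) ∪
              L.biUnion (fun v => (G.cliqueFinset 3).filter (fun t => v ∈ t))).card :=
            Finset.card_le_card hcover
        _ ≤ (H.powersetCard 3).card +
              (L.biUnion (fun v => (G.cliqueFinset 3).filter (fun t => v ∈ t))).card :=
            Finset.card_union_le _ _
        _ ≤ H.card.choose 3 + ∑ v ∈ L, ((G.cliqueFinset 3).filter (fun t => v ∈ t)).card := by
            gcongr
            · rw [Finset.card_powersetCard]
            · exact Finset.card_biUnion_le
        _ ≤ H.card.choose 3 + ∑ v ∈ L, (G.degree v).choose 2 := by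
            gcongr with v hv
            exact triangles_through_vertex_le G v
    -- pass to the reals
    have step1 : ((G.cliqueFinset 3).card : ℝ) ≤
        (H.card : ℝ) ^ 3 / 6 + ∑ v ∈ L, (G.degree v : ℝ) ^ 2 / 2 := by
      calc ((G.cliqueFinset 3).card : ℝ)
          ≤ (H.card.choose 3 : ℝ) + ∑ v ∈ L, ((G.degree v).choose 2 : ℝ) := by
            exact_mod_cast hcount
        _ ≤ (H.card : ℝ) ^ 3 / 6 + ∑ v ∈ L, (G.degree v : ℝ) ^ 2 / 2 := by
            gcongr with v hv
            · have := Nat.choose_le_pow_div (α := ℝ) 3 H.card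
              simpa [Nat.factorial] using this
            · have := Nat.choose_le_pow_div (α := ℝ) 2 (G.degree v)
              simpa [Nat.factorial] using this
    have step2 : ∑ v ∈ L, (G.degree v : ℝ) ^ 2 / 2 ≤ s * M := by
      have h1 : ∑ v ∈ L, (G.degree v : ℝ) ^ 2 / 2 ≤ ∑ v ∈ L, s * (G.degree v : ℝ) / 2 := by
        apply Finset.sum_le_sum
        intro v hv
        have hlt : (G.degree v : ℝ) < s := by
          simpa [hLdef] using (Finset.mem_filter.1 hv).2
        have hd0 : (0 : ℝ) ≤ (G.degree v : ℝ) := by positivity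
        nlinarith
      have hsum : ∑ v ∈ L, (G.degree v : ℝ) ≤ 2 * M := by
        rw [← hdeg]
        apply Finset.sum_le_sum_of_subset_of_nonneg (Finset.subset_univ L)
        intro v _ _; positivity
      have heq : ∑ v ∈ L, s * (G.degree v : ℝ) / 2 = s * (∑ v ∈ L, (G.degree v : ℝ)) / 2 := by
        rw [Finset.mul_sum, Finset.sum_div]
      have h2 : s * (∑ v ∈ L, (G.degree v : ℝ)) / 2 ≤ s * (2 * M) / 2 := by gcongr
      calc ∑ v ∈ L, (G.degree v : ℝ) ^ 2 / 2
          ≤ ∑ v ∈ L, s * (G.degree v : ℝ) / 2 := h1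
        _ = s * (∑ v ∈ L, (G.degree v : ℝ)) / 2 := heq
        _ ≤ s * (2 * M) / 2 := h2
        _ = s * M := by ring
    have step3 : (H.card : ℝ) ^ 3 / 6 ≤ s ^ 3 / 6 := by
      gcongr
    have hreal : ((G.cliqueFinset 3).card : ℝ) ≤ s ^ 3 / 6 + s * M := by linarith
    -- final arithmetic
    have ha2 : (Real.sqrt 2) ^ 2 = 2 := Real.sq_sqrt (by norm_num)
    have ha0 : 0 ≤ Real.sqrt 2 := Real.sqrt_nonneg 2
    have ha32 : Real.sqrt 2 ≤ 3 / 2 := by nlinarith [ha2, ha0]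
    rw [hMr]
    have hfin : s ^ 3 / 6 + s * M ≤ 2 * r ^ 3 := by
      have key : (Real.sqrt 2 * r) ^ 3 = 2 * Real.sqrt 2 * r ^ 3 := by
        rw [mul_pow, pow_succ, ha2]
      rw [hsr, ← hr2, key]
      nlinarith [mul_nonneg (sub_nonneg.2 ha32) (pow_nonneg hr0 3), pow_nonneg hr0 3,
        mul_nonneg ha0 hr0, sq_nonneg r]
    linarith
end

section
/- Let G be a finite simple graph with m edges, fix a total order ≺ on vertices, and let L be the set of vertices with deg(v) ≤ 2ᾱ/ε where ᾱ ≥ α(G) and ε ∈ (0,1). Then Σ_{u∈L} d⁺(u) ≥ (1 − ε)·m, where d⁺(u) counts neighbors v of u with u ≺ v. -/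
open SimpleGraph Finset
open scoped Classical

/- ### Auxiliary lemmas -/

lemma aux_isAcyclic_anti {V : Type*} {G H : SimpleGraph V} (h : H ≤ G) (hG : G.IsAcyclic) :
    H.IsAcyclic := fun _ c hc => hG (c.mapLe h) (hc.mapLe h)

lemma aux_concat_isPath {V : Type*} {G : SimpleGraph V} {a w x : V} {q : G.Walk a w}
    (hq : q.IsPath) (h : G.Adj w x) (hx : x ∉ q.support) : (q.concat h).IsPath := by
  rw [← SimpleGraph.Walk.isPath_reverse_iff, SimpleGraph.Walk.reverse_concat]
  exact hq.reverse.cons (by simpa [SimpleGraph.Walk.support_reverse] using hx)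

/-- A finite acyclic graph with an edge has a leaf. -/
lemma aux_exists_leaf {V : Type*} [Fintype V] (G : SimpleGraph V) (hA : G.IsAcyclic)
    {a b : V} (hab : G.Adj a b) :
    ∃ v w, G.Adj v w ∧ ∀ x, G.Adj v x → x = w := by
  classical
  obtain ⟨v, hv, hmax⟩ := Finset.exists_max_image
    (Finset.univ.filter (fun x => G.Reachable a x)) (G.dist a)
    ⟨b, by simp [hab.reachable]⟩
  simp only [Finset.mem_filter, Finset.mem_univ, true_and] at hv
  have hmax' : ∀ x, G.Reachable a x → G.dist a x ≤ G.dist a v := by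
    intro x hx; exact hmax x (by simp [hx])
  have hd1 : 1 ≤ G.dist a v := by
    have := hmax' b hab.reachable
    rwa [(SimpleGraph.dist_eq_one_iff_adj).mpr hab] at this
  have hva : v ≠ a := by
    rintro rfl
    simp [SimpleGraph.dist_self] at hd1
  obtain ⟨p, hp, hplen⟩ := hv.exists_path_of_dist
  -- key claim: for every neighbor w of v, the shortest path from a to w avoids v,
  -- and extending it by the edge w-v gives a path from a to v, which must be p.
  have key : ∀ w (hw : G.Adj v w),
      ∃ (q : G.Walk a w), q.concat hw.symm = p := by
    intro w hw
    have hwr : G.Reachable a w := hv.trans hw.reachable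
    obtain ⟨q, hq, hqlen⟩ := hwr.exists_path_of_dist
    have hvq : v ∉ q.support := by
      intro hvq
      have ht : (q.takeUntil v hvq).IsPath := hq.takeUntil hvq
      have htp : q.takeUntil v hvq = p := by
        have := hA.path_unique ⟨q.takeUntil v hvq, ht⟩ ⟨p, hp⟩
        exact congrArg Subtype.val this
      have hsplit : (q.takeUntil v hvq).length + (q.dropUntil v hvq).length = q.length := by
        rw [← SimpleGraph.Walk.length_append, SimpleGraph.Walk.take_spec]
      have hdrop : 1 ≤ (q.dropUntil v hvq).length := by
        by_contra hle
        push_neg at hle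
        interval_cases h : (q.dropUntil v hvq).length
        · exact hw.ne (SimpleGraph.Walk.eq_of_length_eq_zero h)
      have h1 : G.dist a v + 1 ≤ q.length := by
        rw [← hsplit, htp, hplen]; omega
      have h2 : q.length ≤ G.dist a v := by rw [hqlen]; exact hmax' w hwr
      omega
    have hcp : (q.concat hw.symm).IsPath := aux_concat_isPath hq hw.symm hvq
    have := hA.path_unique ⟨q.concat hw.symm, hcp⟩ ⟨p, hp⟩
    exact ⟨q, congrArg Subtype.val this⟩
  -- v has at least one neighbor
  have hpnil : ¬ p.reverse.Nil := by
    rw [SimpleGraph.Walk.not_nil_iff_lt_length, SimpleGraph.Walk.length_reverse, hplen]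
    omega
  obtain ⟨u, hu, q, -⟩ := SimpleGraph.Walk.not_nil_iff.mp hpnil
  refine ⟨v, u, hu, ?_⟩
  intro x hx
  obtain ⟨q1, hq1⟩ := key x hx
  obtain ⟨q2, hq2⟩ := key u hu
  have := q1.concat_inj (h := hx.symm) (p' := q2) (h' := hu.symm) (hq1.trans hq2.symm)
  exact this.1

/-- A finite acyclic graph has at most as many edges as vertices in its support. -/
lemma aux_forest_card {V : Type*} [Fintype V] :
    ∀ (n : ℕ) (G : SimpleGraph V) [DecidableRel G.Adj] [Fintype G.edgeSet],
      G.IsAcyclic → G.edgeFinset.card = n →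
      G.edgeFinset.card ≤ (Finset.univ.filter (fun v => v ∈ G.support)).card := by
  classical
  intro n
  induction n using Nat.strong_induction_on with
  | _ n ih =>
    intro G _ _ hA hn
    rcases Nat.eq_zero_or_pos n with h0 | hpos
    · omega
    · have hne : G.edgeFinset.Nonempty := by
        rw [← Finset.card_pos, hn]; exact hpos
      obtain ⟨e, he⟩ := hne
      rw [SimpleGraph.mem_edgeFinset] at he
      induction e using Sym2.ind with
      | _ a b =>
      have hab : G.Adj a b := he
      obtain ⟨v, w, hvw, huniq⟩ := aux_exists_leaf G hA hab
      set G' := G.deleteEdges (({s(v, w)} : Finset (Sym2 V)) : Set (Sym2 V)) with hG'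
      have hG'le : G' ≤ G := G.deleteEdges_le _
      have hG'A : G'.IsAcyclic := aux_isAcyclic_anti hG'le hA
      have hEF : G'.edgeFinset = G.edgeFinset \ ({s(v, w)} : Finset (Sym2 V)) :=
        SimpleGraph.edgeFinset_deleteEdges (G := G) ({s(v,w)} : Finset (Sym2 V))
      have hmem : s(v, w) ∈ G.edgeFinset := by
        rw [SimpleGraph.mem_edgeFinset]; exact hvw
      have hcard' : G'.edgeFinset.card = n - 1 := by
        rw [hEF, Finset.sdiff_singleton_eq_erase, Finset.card_erase_of_mem hmem, hn]
      have hIH := ih (n - 1) (by omega) G' hG'A hcard'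
      -- support of G' avoids v
      have hsub : (Finset.univ.filter (fun x => x ∈ G'.support)) ⊆
          (Finset.univ.filter (fun x => x ∈ G.support)).erase v := by
        intro x hx
        simp only [Finset.mem_filter, Finset.mem_univ, true_and,
          SimpleGraph.mem_support] at hx
        obtain ⟨y, hy⟩ := hx
        rw [hG', SimpleGraph.deleteEdges_adj] at hy
        refine Finset.mem_erase.mpr ⟨?_, ?_⟩
        · rintro rfl
          exact hy.2 (by rw [huniq y hy.1]; simp)
        · simp only [Finset.mem_filter, Finset.mem_univ, true_and,
            SimpleGraph.mem_support]
          exact ⟨y, hy.1⟩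
      have hvmem : v ∈ Finset.univ.filter (fun x => x ∈ G.support) := by
        simp only [Finset.mem_filter, Finset.mem_univ, true_and, SimpleGraph.mem_support]
        exact ⟨w, hvw⟩
      have hcardsupp : (Finset.univ.filter (fun x => x ∈ G'.support)).card ≤
          (Finset.univ.filter (fun x => x ∈ G.support)).card - 1 := by
        calc (Finset.univ.filter (fun x => x ∈ G'.support)).card
            ≤ ((Finset.univ.filter (fun x => x ∈ G.support)).erase v).card :=
              Finset.card_le_card hsub
          _ = (Finset.univ.filter (fun x => x ∈ G.support)).card - 1 :=
              Finset.card_erase_of_mem hvmem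
      have hposs : 1 ≤ (Finset.univ.filter (fun x => x ∈ G.support)).card :=
        Finset.card_pos.mpr ⟨v, hvmem⟩
      omega

/-- A single-edge graph is acyclic. -/
lemma aux_singleEdge_acyclic {V : Type*} (e : Sym2 V) :
    (SimpleGraph.fromEdgeSet {e} : SimpleGraph V).IsAcyclic := by
  intro v c hc
  have h3 : 3 ≤ c.length := hc.three_le_length
  have hnd : c.edges.Nodup := hc.edges_nodup
  have hlen : c.edges.length = c.length := c.length_edges
  have hall : ∀ f ∈ c.edges, f = e := by
    intro f hf
    have := c.edges_subset_edgeSet hf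
    rw [SimpleGraph.edgeSet_fromEdgeSet] at this
    exact this.1
  rcases hce : c.edges with _ | ⟨e1, _ | ⟨e2, rest⟩⟩
  · rw [hce] at hlen; simp at hlen; omega
  · rw [hce] at hlen; simp at hlen; omega
  · rw [hce] at hnd hall
    have h1 : e1 = e := hall e1 (by simp)
    have h2 : e2 = e := hall e2 (by simp)
    simp [h1, h2] at hnd

/-- The defining set of `arboricity` is nonempty for finite graphs. -/
lemma aux_arboricity_mem {V : Type*} [Fintype V] (G : SimpleGraph V) [DecidableRel G.Adj] :
    ∃ F : Fin (arboricity G) → SimpleGraph V, (∀ i, (F i).IsAcyclic) ∧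
      ∀ ⦃a b : V⦄, G.Adj a b → ∃ i, (F i).Adj a b := by
  classical
  have hne : {k | ∃ F : Fin k → SimpleGraph V, (∀ i, (F i).IsAcyclic) ∧
      ∀ ⦃a b : V⦄, G.Adj a b → ∃ i, (F i).Adj a b}.Nonempty := by
    refine ⟨G.edgeFinset.card, ?_⟩
    let eqv := G.edgeFinset.equivFin
    refine ⟨fun i => SimpleGraph.fromEdgeSet {(eqv.symm i : Sym2 V)},
      fun i => aux_singleEdge_acyclic _, ?_⟩
    intro a b hab
    have hmem : s(a, b) ∈ G.edgeFinset := by rw [SimpleGraph.mem_edgeFinset]; exact hab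
    refine ⟨eqv ⟨s(a, b), hmem⟩, ?_⟩
    rw [SimpleGraph.fromEdgeSet_adj]
    exact ⟨by simp, hab.ne⟩
  exact Nat.sInf_mem hne

/-- with a total order sorting the vertices by degree, `α(G) ≤ ᾱ`,
`ε ∈ (0,1)` and `L` the set of vertices of degree at most `2ᾱ/ε`, we have
`Σ_{u∈L} d⁺(u) ≥ (1 − ε)·m`. -/
theorem stmt_14 {V : Type*} [Fintype V] [LinearOrder V] (G : SimpleGraph V)
    [DecidableRel G.Adj] (hord : ∀ u v : V, u < v → G.degree u ≤ G.degree v)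
    (alphaBar ε : ℝ) (hε : ε ∈ Set.Ioo (0 : ℝ) 1)
    (halpha : (arboricity G : ℝ) ≤ alphaBar) :
    (1 - ε) * (G.edgeFinset.card : ℝ) ≤
      ∑ u ∈ Finset.univ.filter fun v : V => (G.degree v : ℝ) ≤ 2 * alphaBar / ε,
        (((G.neighborFinset u).filter fun v => u < v).card : ℝ) := by
  classical
  obtain ⟨hε0, hε1⟩ := hε
  set T : ℝ := 2 * alphaBar / ε with hT
  set t : V → Finset V := fun u => (G.neighborFinset u).filter (fun v => u < v) with ht
  set m : ℕ := G.edgeFinset.card with hm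
  set k : ℕ := arboricity G with hk
  set Ls : Finset V := Finset.univ.filter (fun v : V => (G.degree v : ℝ) ≤ T) with hLs
  set Hs : Finset V := Finset.univ.filter (fun v : V => ¬ ((G.degree v : ℝ) ≤ T)) with hHs
  -- (A) total sum equals m
  have hA : ∑ u : V, (t u).card = m := by
    rw [← Finset.card_sigma]
    refine Finset.card_bij (fun p _ => s(p.1, p.2)) ?_ ?_ ?_
    · rintro ⟨u, v⟩ hp
      simp only [Finset.mem_sigma, Finset.mem_univ, true_and, ht, Finset.mem_filter,
        SimpleGraph.mem_neighborFinset] at hp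
      rw [SimpleGraph.mem_edgeFinset]
      exact hp.1
    · rintro ⟨u, v⟩ hp ⟨u', v'⟩ hp' hst
      simp only [Finset.mem_sigma, Finset.mem_univ, true_and, ht, Finset.mem_filter,
        SimpleGraph.mem_neighborFinset] at hp hp'
      rw [Sym2.eq_iff] at hst
      rcases hst with ⟨rfl, rfl⟩ | ⟨rfl, rfl⟩
      · rfl
      · exact absurd (hp.2.trans hp'.2) (lt_irrefl _)
    · intro e he
      rw [SimpleGraph.mem_edgeFinset] at he
      induction e using Sym2.ind with
      | _ a b =>
      rw [SimpleGraph.mem_edgeSet] at he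
      rcases lt_or_gt_of_ne (G.ne_of_adj he) with hlt | hgt
      · exact ⟨⟨a, b⟩, by simp [ht, SimpleGraph.mem_neighborFinset, he, hlt], rfl⟩
      · exact ⟨⟨b, a⟩, by simp [ht, SimpleGraph.mem_neighborFinset, he.symm, hgt],
          Sym2.eq_swap⟩
  -- the graph induced on high-degree vertices
  set GH : SimpleGraph V :=
    { Adj := fun x y => G.Adj x y ∧ x ∈ Hs ∧ y ∈ Hs
      symm := ⟨by rintro x y ⟨h1, h2, h3⟩; exact ⟨h1.symm, h3, h2⟩⟩
      loopless := ⟨by rintro x ⟨h1, -⟩; exact (G.ne_of_adj h1) rfl⟩ } with hGH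
  -- (B1) sum over Hs is at most the number of GH-edges
  have hB1 : ∑ u ∈ Hs, (t u).card ≤ GH.edgeFinset.card := by
    rw [← Finset.card_sigma]
    refine Finset.card_le_card_of_injOn (fun p => s(p.1, p.2)) ?_ ?_
    · rintro ⟨u, v⟩ hp
      simp only [Finset.mem_coe, Finset.mem_sigma, ht, Finset.mem_filter,
        SimpleGraph.mem_neighborFinset] at hp
      obtain ⟨hu, hadj, hlt⟩ := hp
      have hvH : v ∈ Hs := by
        simp only [hHs, Finset.mem_filter, Finset.mem_univ, true_and, not_le] at hu ⊢
        exact lt_of_lt_of_le hu (Nat.cast_le.mpr (hord u v hlt))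
      rw [Finset.mem_coe, SimpleGraph.mem_edgeFinset]
      exact ⟨hadj, hu, hvH⟩
    · rintro ⟨u, v⟩ hp ⟨u', v'⟩ hp' hst
      simp only [Finset.coe_sigma, Set.mem_sigma_iff, Finset.mem_coe, ht, Finset.mem_filter,
        SimpleGraph.mem_neighborFinset] at hp hp'
      rw [Sym2.eq_iff] at hst
      rcases hst with ⟨rfl, rfl⟩ | ⟨rfl, rfl⟩
      · rfl
      · exact absurd (hp.2.2.trans hp'.2.2) (lt_irrefl _)
  -- (B2) the number of GH-edges is at most k * |Hs|
  obtain ⟨F, hFacyc, hFcov⟩ := aux_arboricity_mem G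
  have hB2 : GH.edgeFinset.card ≤ k * Hs.card := by
    have hsub : GH.edgeFinset ⊆
        (Finset.univ : Finset (Fin k)).biUnion (fun i => (F i ⊓ GH).edgeFinset) := by
      intro e he
      rw [SimpleGraph.mem_edgeFinset] at he
      induction e using Sym2.ind with
      | _ a b =>
      rw [SimpleGraph.mem_edgeSet] at he
      obtain ⟨hadj, haH, hbH⟩ := he
      obtain ⟨i, hi⟩ := hFcov hadj
      refine Finset.mem_biUnion.mpr ⟨i, Finset.mem_univ _, ?_⟩
      rw [SimpleGraph.mem_edgeFinset]
      exact ⟨hi, hadj, haH, hbH⟩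
    calc GH.edgeFinset.card
        ≤ ((Finset.univ : Finset (Fin k)).biUnion
            (fun i => (F i ⊓ GH).edgeFinset)).card := Finset.card_le_card hsub
      _ ≤ ∑ i : Fin k, (F i ⊓ GH).edgeFinset.card := Finset.card_biUnion_le
      _ ≤ ∑ _i : Fin k, Hs.card := by
          refine Finset.sum_le_sum ?_
          intro i _
          have hacyc : (F i ⊓ GH).IsAcyclic := aux_isAcyclic_anti inf_le_left (hFacyc i)
          calc (F i ⊓ GH).edgeFinset.card
              ≤ (Finset.univ.filter (fun v => v ∈ (F i ⊓ GH).support)).card :=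
                aux_forest_card _ (F i ⊓ GH) hacyc rfl
            _ ≤ Hs.card := by
                refine Finset.card_le_card ?_
                intro x hx
                simp only [Finset.mem_filter, Finset.mem_univ, true_and,
                  SimpleGraph.mem_support] at hx
                obtain ⟨y, hy⟩ := hx
                exact hy.2.2.1
      _ = k * Hs.card := by simp [Finset.sum_const, mul_comm]
  have hB : (∑ u ∈ Hs, ((t u).card : ℝ)) ≤ (k : ℝ) * Hs.card := by
    have := hB1.trans hB2
    calc (∑ u ∈ Hs, ((t u).card : ℝ)) = ((∑ u ∈ Hs, (t u).card : ℕ) : ℝ) := by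
          push_cast; ring
      _ ≤ ((k * Hs.card : ℕ) : ℝ) := Nat.cast_le.mpr this
      _ = (k : ℝ) * Hs.card := by push_cast; ring
  -- (C) |Hs| * T ≤ 2m
  have hC : (Hs.card : ℝ) * T ≤ 2 * m := by
    have h1 : (Hs.card : ℝ) * T ≤ ∑ v ∈ Hs, (G.degree v : ℝ) := by
      have := Finset.card_nsmul_le_sum Hs (fun v => (G.degree v : ℝ)) T ?_
      · simpa [nsmul_eq_mul] using this
      · intro x hx
        simp only [hHs, Finset.mem_filter, Finset.mem_univ, true_and, not_le] at hx
        exact le_of_lt hx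
    have h2 : ∑ v ∈ Hs, (G.degree v : ℝ) ≤ ∑ v : V, (G.degree v : ℝ) := by
      refine Finset.sum_le_sum_of_subset_of_nonneg (Finset.subset_univ _) ?_
      intro x _ _; positivity
    have h3 : ∑ v : V, (G.degree v : ℝ) = 2 * m := by
      have := G.sum_degrees_eq_twice_card_edges
      calc ∑ v : V, (G.degree v : ℝ) = ((∑ v : V, G.degree v : ℕ) : ℝ) := by push_cast; ring
        _ = ((2 * m : ℕ) : ℝ) := by rw [this]
        _ = 2 * m := by push_cast; ring
    linarith
  -- combine: Σ_{Hs} ≤ ε m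
  have hk_le : (k : ℝ) ≤ alphaBar := halpha
  have halphaBar_nonneg : 0 ≤ alphaBar := le_trans (by positivity) hk_le
  have hHsT : (Hs.card : ℝ) * (2 * alphaBar) ≤ 2 * m * ε := by
    have := mul_le_mul_of_nonneg_right hC (le_of_lt hε0)
    rw [hT] at this
    calc (Hs.card : ℝ) * (2 * alphaBar) = Hs.card * (2 * alphaBar / ε) * ε := by
          field_simp
      _ ≤ 2 * m * ε := this
  have hHsbound : ∑ u ∈ Hs, ((t u).card : ℝ) ≤ ε * m := by
    have h1 : (k : ℝ) * Hs.card ≤ alphaBar * Hs.card :=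
      mul_le_mul_of_nonneg_right hk_le (by positivity)
    nlinarith [hB]
  -- split the total sum
  have hsplit : (∑ u ∈ Ls, ((t u).card : ℝ)) + (∑ u ∈ Hs, ((t u).card : ℝ)) = m := by
    rw [hLs, hHs, Finset.sum_filter_add_sum_filter_not]
    calc ∑ u : V, ((t u).card : ℝ) = ((∑ u : V, (t u).card : ℕ) : ℝ) := by push_cast; ring
      _ = m := by rw [hA]
  have hmnn : (0 : ℝ) ≤ m := by positivity
  have goal' : (1 - ε) * (m : ℝ) ≤ ∑ u ∈ Ls, ((t u).card : ℝ) := by nlinarith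
  simpa [hLs, ht, hm, hT] using goal'
end
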